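/- Let a(n) be the number of pairs (f, P) where f is a parking function on [n] and P is a set partition of [n] each of whose blocks is contained in a single fiber of f (equivalently, P refines the partition of [n] into the nonempty fibers of f); set a(0) = 1. Then the exponential generating series A(t) = Σ_{n≥0} a(n) · t^n/n! satisfies the functional equation A(t) = exp(exp(t·A(t)) − 1) in ℚ[[t]]. In particular a(0),…,a(5) = 1, 1, 4, 29, 311, 4447. -/

import Mathlib

open PowerSeries

/-- A parking function on `[n] = {1, …, n}` (modeled by `Fin n`, with `i : Fin n`
representing the value `i + 1`). -/
def IsParkingFunction (n : ℕ) (f : Fin n → Fin n) : Prop :=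
  ∀ k ∈ Finset.Icc 1 n, k ≤ (Finset.univ.filter fun i => (f i : ℕ) + 1 ≤ k).card

/-- `a n` is the number of pairs `(f, P)` where `f` is a parking function on `[n]`
and `P` is a set partition of `[n]` each of whose blocks is contained in a single
fiber of `f`.  (For `n = 0` this is `1`.) -/
noncomputable def aCount (n : ℕ) : ℕ :=
  Nat.card ((f : {f : Fin n → Fin n // IsParkingFunction n f}) ×
    {P : Finpartition (Finset.univ : Finset (Fin n)) //
      ∀ b ∈ P.parts, ∃ c : Fin n, ∀ x ∈ b, f.1 x = c})

/-- The exponential generating series `A(t) = Σ_{n ≥ 0} a(n) · t^n / n!`. -/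
noncomputable def A : PowerSeries ℚ :=
  PowerSeries.mk fun n => (aCount n : ℚ) / (n.factorial : ℚ)

/-- Composition `F(g)` of formal power series, valid (i.e., agreeing with the usual
substitution) whenever the constant term of `g` is zero. -/
noncomputable def seriesComp (F g : PowerSeries ℚ) : PowerSeries ℚ :=
  PowerSeries.mk fun n =>
    PowerSeries.coeff (R := ℚ) n (∑ k ∈ Finset.range (n + 1), PowerSeries.coeff (R := ℚ) k F • g ^ k)

/-!
Colouring each block of the partition by the common value of `f` on it, `aCount n` counts the
partitions of `[n]` with coloured blocks whose colouring is a parking function. Pollak's cyclic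
shift argument (colours in `ZMod (n + 1)`; Raney's lemma gives each colouring exactly one shift that
parks) turns this into `(n + 1) · a(n) = F(n + 1, n)`, where `F(c, n)` counts partitions of `[n]`
with blocks coloured in `c` colours. Splitting off the block of the least element gives
`F(c, n + 1) = c · ∑ⱼ C(n, j) F(c, j)`, i.e. `∑ₙ F(c, n) tⁿ / n! = E(t) ^ c` with
`E(t) = exp (exp t - 1)`. Hence `(n + 1) [tⁿ] A = [tⁿ] E ^ (n + 1)`, which by Lagrange inversion
says `A = E(t A)`.
-/

open Finset

namespace PowerSeries

section Subst

variable {R : Type*} [CommRing R]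

theorem coeff_pow_eq_zero_of_lt {g : R⟦X⟧} (hg : constantCoeff g = 0) {n k : ℕ} (h : n < k) :
    coeff n (g ^ k) = 0 :=
  X_pow_dvd_iff.1 (pow_dvd_pow_of_dvd (X_dvd_iff.2 hg) k) n h

theorem coeff_subst_eq_sum_range {g : R⟦X⟧} (hg : constantCoeff g = 0) (f : R⟦X⟧) {n N : ℕ}
    (hN : n < N) : coeff n (f.subst g) = ∑ k ∈ range N, coeff k f * coeff n (g ^ k) := by
  rw [coeff_subst' (HasSubst.of_constantCoeff_zero' hg)]
  refine finsum_eq_sum_of_support_subset _ fun k hk => ?_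
  by_contra hkN
  simp only [coe_range, Set.mem_Iio, not_lt] at hkN
  exact hk (by simp [coeff_pow_eq_zero_of_lt hg (hN.trans_le hkN)])

theorem coeff_subst_mul_eq_sum_range {g : R⟦X⟧} (hg : constantCoeff g = 0) (f h : R⟦X⟧) (n : ℕ) :
    coeff n (f.subst g * h) = ∑ k ∈ range (n + 1), coeff k f * coeff n (g ^ k * h) := by
  simp only [coeff_mul, mul_sum]
  rw [sum_comm]
  refine sum_congr rfl fun p hp => ?_
  rw [coeff_subst_eq_sum_range hg f (Nat.antidiagonal.fst_lt hp), sum_mul]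
  exact sum_congr rfl fun k _ => mul_assoc _ _ _

theorem subst_one {g : R⟦X⟧} (hg : HasSubst g) : (1 : R⟦X⟧).subst g = 1 := by
  rw [← coe_substAlgHom hg, map_one]

theorem constantCoeff_subst_of_constantCoeff_eq_zero {g : R⟦X⟧}
    (hg : constantCoeff g = 0) (f : R⟦X⟧) : constantCoeff (f.subst g) = constantCoeff f := by
  simpa using coeff_subst_eq_sum_range hg f zero_lt_one

end Subst

theorem eq_of_derivative_eq_mul {K : Type*} [Field K] [CharZero K] {F G H : K⟦X⟧}
    (hF : d⁄dX K F = F * H) (hG : d⁄dX K G = G * H) (hG0 : constantCoeff G ≠ 0)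
    (h0 : constantCoeff F = constantCoeff G) : F = G := by
  have hGG : G * G⁻¹ = 1 := PowerSeries.mul_inv_cancel G hG0
  have hquot : F * G⁻¹ = 1 := by
    refine derivative.ext ?_ ?_
    · rw [Derivation.leibniz, derivative_inv', hF, hG, derivative_one, smul_eq_mul, smul_eq_mul]
      linear_combination (-(F * H * G⁻¹)) * hGG
    · simp [h0, hG0]
  calc F = F * G⁻¹ * G := by rw [mul_assoc, mul_comm G⁻¹, hGG, mul_one]
    _ = G := by rw [hquot, one_mul]

theorem coeff_mk_div_factorial_mul_exp (a : ℕ → ℚ) (n : ℕ) :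
    coeff n (mk (fun k => a k / k.factorial) * exp ℚ) =
      (∑ j ∈ range (n + 1), n.choose j * a j) / n.factorial := by
  rw [coeff_mul, Nat.sum_antidiagonal_eq_sum_range_succ_mk, sum_div]
  refine sum_congr rfl fun j hj => ?_
  have hjn : j ≤ n := Nat.lt_succ_iff.1 (mem_range.1 hj)
  rw [coeff_mk, coeff_exp, Nat.cast_choose ℚ hjn]
  simp only [Algebra.algebraMap_self, RingHom.id_apply]
  field_simp

section Lagrange

variable {K : Type*} [Field K]

theorem exists_eq_X_mul_subst {E : K⟦X⟧} (hE : constantCoeff E ≠ 0) :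
    ∃ Y : K⟦X⟧, constantCoeff Y = 0 ∧ Y = X * E.subst Y := by
  have hP : constantCoeff (X * E⁻¹) = 0 := by simp
  have hP' : IsUnit (coeff 1 (X * E⁻¹)) := by simpa [coeff_succ_X_mul] using hE
  -- `Y` is the compositional inverse of `X / E`.
  set Y := (X * E⁻¹).substInvOfIsUnit hP'
  have hY : HasSubst Y := HasSubst.substInvOfIsUnit _ hP'
  refine ⟨Y, constantCoeff_substInvOfIsUnit _ hP', ?_⟩
  have hXY : Y * E⁻¹.subst Y = X := by
    have h : (X * E⁻¹).subst Y = X := subst_substInvOfIsUnit_right _ hP hP'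
    rwa [subst_mul hY, subst_X hY] at h
  calc Y = Y * (E⁻¹ * E).subst Y := by rw [PowerSeries.inv_mul_cancel E hE, subst_one hY, mul_one]
    _ = X * E.subst Y := by rw [subst_mul hY, ← mul_assoc, hXY]

variable [CharZero K]

/-- The residue computation behind Lagrange inversion: `U⁻¹ ^ (m + 1) * (X * U)'` equals
`U⁻¹ ^ m - X * (U⁻¹ ^ m)' / m`, and the coefficient of `X ^ m` in `X * F'` is `m` times that of
`F`. -/
theorem coeff_inv_pow_succ_mul_derivative_X_mul {U : K⟦X⟧} (hU : constantCoeff U ≠ 0) (m : ℕ) :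
    coeff m (U⁻¹ ^ (m + 1) * d⁄dX K (X * U)) = if m = 0 then 1 else 0 := by
  have hsplit : U⁻¹ ^ (m + 1) * d⁄dX K (X * U) = U⁻¹ ^ m + X * (U⁻¹ ^ (m + 1) * d⁄dX K U) := by
    rw [Derivation.leibniz, derivative_X, smul_eq_mul, smul_eq_mul, pow_succ]
    linear_combination (U⁻¹ ^ m) * PowerSeries.inv_mul_cancel U hU
  rw [hsplit, map_add]
  rcases m with _ | q
  · simp
  · have hderiv := congrArg (coeff q) (derivative_pow U⁻¹ (q + 1))
    rw [coeff_derivative, derivative_inv'] at hderiv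
    have hq : (q + 1 : K) ≠ 0 := Nat.cast_add_one_ne_zero q
    rw [if_neg q.succ_ne_zero, coeff_succ_X_mul]
    refine mul_left_cancel₀ hq ?_
    have hderiv_eq : (↑(q + 1) : K⟦X⟧) * U⁻¹ ^ (q + 1 - 1) * (-U⁻¹ ^ 2 * d⁄dX K U)
        = C (-(q + 1 : K)) * (U⁻¹ ^ (q + 1 + 1) * d⁄dX K U) := by
      simp only [map_neg, map_add, map_natCast, map_one, Nat.add_sub_cancel]
      push_cast
      ring
    rw [hderiv_eq, coeff_C_mul] at hderiv
    linear_combination hderiv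

theorem coeff_X_mul_pow_mul_inv_pow_mul_derivative {U : K⟦X⟧} (hU : constantCoeff U ≠ 0)
    {k r : ℕ} (hk : k ≤ r) :
    coeff r ((X * U) ^ k * (U⁻¹ ^ (r + 1) * d⁄dX K (X * U))) = if k = r then 1 else 0 := by
  obtain ⟨m, rfl⟩ := Nat.exists_eq_add_of_le hk
  have hcancel : (X * U) ^ k * U⁻¹ ^ (k + m + 1) = X ^ k * U⁻¹ ^ (m + 1) := by
    rw [show (X * U) ^ k * U⁻¹ ^ (k + m + 1) = X ^ k * (U * U⁻¹) ^ k * U⁻¹ ^ (m + 1) by ring,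
      PowerSeries.mul_inv_cancel U hU, one_pow, mul_one]
  rw [← mul_assoc, hcancel, mul_assoc, add_comm k m, coeff_X_pow_mul,
    coeff_inv_pow_succ_mul_derivative_X_mul hU]
  simp

theorem coeff_eq_coeff_subst_X_mul_mul {U : K⟦X⟧} (hU : constantCoeff U ≠ 0) (B : K⟦X⟧)
    (r : ℕ) : coeff r B = coeff r (B.subst (X * U) * (U⁻¹ ^ (r + 1) * d⁄dX K (X * U))) := by
  rw [coeff_subst_mul_eq_sum_range (by simp), sum_congr rfl fun k hk =>
    by rw [coeff_X_mul_pow_mul_inv_pow_mul_derivative hU (mem_range_succ_iff.1 hk)]]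
  simp

theorem eq_subst_X_mul_of_coeff_pow {E A : K⟦X⟧} (hE : constantCoeff E ≠ 0)
    (hA : ∀ n : ℕ, (n + 1 : K) * coeff n A = coeff n (E ^ (n + 1))) :
    A = E.subst (X * A) := by
  obtain ⟨Y, hY0, hY⟩ := exists_eq_X_mul_subst hE
  have hU : constantCoeff (E.subst Y) ≠ 0 := by
    rwa [constantCoeff_subst_of_constantCoeff_eq_zero hY0]
  have hcoeffY (n : ℕ) : (n + 1 : K) * coeff (n + 1) Y = coeff n (E ^ (n + 1)) := by
    rw [coeff_eq_coeff_subst_X_mul_mul hU (E ^ (n + 1)) n, ← hY,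
      subst_pow (HasSubst.of_constantCoeff_zero' hY0), ← mul_assoc, ← mul_pow,
      PowerSeries.mul_inv_cancel _ hU, one_pow, one_mul, coeff_derivative, mul_comm]
  have hXA : X * A = Y := by
    ext (_ | n)
    · simp [hY0]
    · rw [coeff_succ_X_mul]
      exact mul_left_cancel₀ (Nat.cast_add_one_ne_zero n) ((hA n).trans (hcoeffY n).symm)
  subst hXA
  exact mul_left_cancel₀ X_ne_zero hY

end Lagrange

end PowerSeries

noncomputable def bellSeries : ℚ⟦X⟧ := (exp ℚ).subst (exp ℚ - 1)

theorem constantCoeff_exp_sub_one (A : Type*) [CommRing A] [Algebra ℚ A] :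
    constantCoeff (exp A - 1) = 0 := by
  simp

theorem constantCoeff_bellSeries : constantCoeff bellSeries = 1 := by
  rw [bellSeries, constantCoeff_subst_of_constantCoeff_eq_zero (constantCoeff_exp_sub_one ℚ),
    constantCoeff_exp]

theorem derivative_bellSeries_pow (c : ℕ) :
    d⁄dX ℚ (bellSeries ^ c) = bellSeries ^ c * (c * exp ℚ) := by
  have hderiv : d⁄dX ℚ bellSeries = bellSeries * exp ℚ := by
    rw [bellSeries,
      derivative_subst (HasSubst.of_constantCoeff_zero' (constantCoeff_exp_sub_one ℚ)), map_sub,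
      derivative_one, sub_zero, derivative_exp]
  rw [derivative_pow, hderiv]
  rcases c with _ | c
  · simp
  · rw [Nat.add_sub_cancel, pow_succ]
    ring

theorem seriesComp_eq_subst {F g : ℚ⟦X⟧} (hg : constantCoeff g = 0) :
    seriesComp F g = F.subst g := by
  ext n
  rw [seriesComp, coeff_mk, coeff_subst_eq_sum_range hg F n.lt_succ_self, map_sum]
  simp only [coeff_smul, smul_eq_mul]

theorem seriesComp_exp_seriesComp_exp_sub_one {W : ℚ⟦X⟧} (hW : constantCoeff W = 0) :
    seriesComp (exp ℚ) (seriesComp (exp ℚ) W - 1) = bellSeries.subst W := by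
  have hW' := HasSubst.of_constantCoeff_zero' hW
  have hinner : seriesComp (exp ℚ) W - 1 = (exp ℚ - 1).subst W := by
    rw [seriesComp_eq_subst hW, subst_sub hW', subst_one hW']
  rw [hinner, seriesComp_eq_subst (constantCoeff_subst_eq_zero hW _ (constantCoeff_exp_sub_one ℚ)),
    bellSeries,
    subst_comp_subst_apply (HasSubst.of_constantCoeff_zero' (constantCoeff_exp_sub_one ℚ)) hW']

theorem Nat.card_eq_sum_card_fiberwise {α β : Type*} [Finite α] [DecidableEq β] {f : α → β}
    {t : Finset β} (h : ∀ a, f a ∈ t) : Nat.card α = ∑ b ∈ t, Nat.card {a // f a = b} := by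
  classical
  have := Fintype.ofFinite α
  simp only [Nat.card_eq_fintype_card, Fintype.card_subtype]
  exact Finset.card_eq_sum_card_fiberwise fun a _ => h a

/-- A partition of `α` into blocks coloured by `μ`, encoded by the map sending each element to
the least element of its block together with the colour of that block. -/
abbrev ColoredPartition (α μ : Type*) [LinearOrder α] : Type _ :=
  {g : α → α × μ // ∀ x, (g x).1 ≤ x ∧ g (g x).1 = g x}

namespace ColoredPartition

variable {α β μ ν : Type*} [LinearOrder α] [LinearOrder β]

def color (g : ColoredPartition α μ) (x : α) : μ := (g.1 x).2

def mapColor (φ : μ → ν) (g : ColoredPartition α μ) : ColoredPartition α ν :=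
  ⟨fun x => ((g.1 x).1, φ (g.1 x).2), fun x => ⟨(g.2 x).1, by simp only [(g.2 x).2]⟩⟩

@[simp]
theorem color_mapColor (φ : μ → ν) (g : ColoredPartition α μ) :
    (g.mapColor φ).color = φ ∘ g.color := rfl

theorem mapColor_eq_self {φ : μ → μ} {g : ColoredPartition α μ}
    (h : ∀ x, φ (g.color x) = g.color x) : g.mapColor φ = g :=
  Subtype.ext <| funext fun x => Prod.ext rfl (h x)

theorem mapColor_injective {φ : μ → ν} (hφ : φ.Injective) :
    (mapColor φ : ColoredPartition α μ → ColoredPartition α ν).Injective := fun _ _ h =>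
  Subtype.ext <| funext fun x =>
    Prod.ext (congrArg (fun g => (g.1 x).1) h) (hφ (congrArg (fun g => (g.1 x).2) h))

def congrLeft (e : α ≃o β) : ColoredPartition α μ ≃ ColoredPartition β μ where
  toFun g := ⟨fun y => (e (g.1 (e.symm y)).1, (g.1 (e.symm y)).2), fun y => by
    refine ⟨e.le_symm_apply.1 (g.2 _).1, ?_⟩
    simp only [OrderIso.symm_apply_apply, (g.2 _).2]⟩
  invFun g := ⟨fun x => (e.symm (g.1 (e x)).1, (g.1 (e x)).2), fun x => by
    refine ⟨e.symm_apply_le.2 (g.2 _).1, ?_⟩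
    simp only [OrderIso.apply_symm_apply, (g.2 _).2]⟩
  left_inv g := by simp
  right_inv g := by simp

section SplitBot

def restrict (g : ColoredPartition α μ) (s : Finset α) (hs : ∀ x ∈ s, (g.1 x).1 ∈ s) :
    ColoredPartition s μ :=
  ⟨fun y => (⟨(g.1 y).1, hs y y.2⟩, (g.1 y).2), fun y => ⟨(g.2 y).1, by simp only [(g.2 y).2]⟩⟩

variable [OrderBot α]

theorem fst_apply_bot (g : ColoredPartition α μ) : (g.1 ⊥).1 = ⊥ := le_bot_iff.1 (g.2 ⊥).1

theorem apply_of_fst_eq_bot (g : ColoredPartition α μ) {x : α} (hx : (g.1 x).1 = ⊥) :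
    g.1 x = (⊥, (g.1 ⊥).2) := by
  rw [← (g.2 x).2, hx]
  exact Prod.ext (fst_apply_bot g) rfl

variable [Fintype α]

def outsideBot (g : ColoredPartition α μ) : Finset α := {x | (g.1 x).1 ≠ ⊥}

theorem mem_outsideBot {g : ColoredPartition α μ} {x : α} :
    x ∈ g.outsideBot ↔ (g.1 x).1 ≠ ⊥ := by
  simp [outsideBot]

theorem bot_notMem_outsideBot (g : ColoredPartition α μ) : ⊥ ∉ g.outsideBot := by
  simp [mem_outsideBot, fst_apply_bot]

theorem fst_mem_outsideBot (g : ColoredPartition α μ) {x : α} (hx : x ∈ g.outsideBot) :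
    (g.1 x).1 ∈ g.outsideBot := by
  rwa [mem_outsideBot, (g.2 x).2, ← mem_outsideBot]

def extendByBotBlock (t : Finset α) (ht : ⊥ ∉ t) (c : μ) (h : ColoredPartition t μ) :
    ColoredPartition α μ :=
  ⟨fun x => if hx : x ∈ t then ((h.1 ⟨x, hx⟩).1, (h.1 ⟨x, hx⟩).2) else (⊥, c), fun x => by
    by_cases hx : x ∈ t
    · have hmem := (h.1 ⟨x, hx⟩).1.2
      simp only [hx, hmem, dif_pos]
      exact ⟨(h.2 _).1, by rw [(h.2 _).2]⟩
    · simp [hx, ht]⟩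

theorem outsideBot_extendByBotBlock (t : Finset α) (ht : ⊥ ∉ t) (c : μ)
    (h : ColoredPartition t μ) : (extendByBotBlock t ht c h).outsideBot = t := by
  ext x
  by_cases hx : x ∈ t
  · simp only [mem_outsideBot, extendByBotBlock, hx, dif_pos, ne_eq, iff_true]
    exact fun hbot => ht (hbot ▸ (h.1 ⟨x, hx⟩).1.2)
  · simp [mem_outsideBot, extendByBotBlock, hx]

/-- Splitting off the block of `⊥`: its colour and the partition of the other elements. -/
def equivOutsideBot (t : Finset α) (ht : ⊥ ∉ t) :
    {g : ColoredPartition α μ // g.outsideBot = t} ≃ μ × ColoredPartition t μ where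
  toFun g := ((g.1.1 ⊥).2, g.1.restrict t fun _ hx => by
    obtain ⟨g, rfl⟩ := g
    exact fst_mem_outsideBot g hx)
  invFun p := ⟨extendByBotBlock t ht p.1 p.2, outsideBot_extendByBotBlock t ht p.1 p.2⟩
  left_inv := by
    rintro ⟨g, rfl⟩
    refine Subtype.ext <| Subtype.ext <| funext fun x => ?_
    by_cases hx : x ∈ g.outsideBot
    · simp [extendByBotBlock, restrict, hx]
    · simp only [extendByBotBlock, hx, dif_neg, not_false_eq_true]
      exact (apply_of_fst_eq_bot g (by simpa [mem_outsideBot] using hx)).symm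
  right_inv := by
    rintro ⟨c, h⟩
    refine Prod.ext ?_ (Subtype.ext <| funext fun y => ?_)
    · simp [extendByBotBlock, ht]
    · simp [extendByBotBlock, restrict]

end SplitBot

theorem card_fin_zero : Nat.card (ColoredPartition (Fin 0) μ) = 1 :=
  Nat.card_eq_one_iff_unique.2
    ⟨⟨fun _ _ => Subtype.ext (funext fun x => x.elim0)⟩, ⟨⟨Fin.elim0, fun x => x.elim0⟩⟩⟩

theorem card_finset (t : Finset α) :
    Nat.card (ColoredPartition t μ) = Nat.card (ColoredPartition (Fin t.card) μ) :=
  Nat.card_congr (congrLeft (t.orderIsoOfFin rfl)).symm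

theorem card_fin_succ [Finite μ] (n : ℕ) :
    Nat.card (ColoredPartition (Fin (n + 1)) μ) =
      Nat.card μ * ∑ j ∈ range (n + 1), n.choose j * Nat.card (ColoredPartition (Fin j) μ) := by
  have hmaps (g : ColoredPartition (Fin (n + 1)) μ) :
      g.outsideBot ∈ (univ.erase ⊥).powerset :=
    mem_powerset.2 fun x hx => mem_erase.2 ⟨fun h => g.bot_notMem_outsideBot (h ▸ hx), mem_univ x⟩
  have hcard : (univ.erase (⊥ : Fin (n + 1))).card = n := by simp
  rw [Nat.card_eq_sum_card_fiberwise hmaps]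
  calc ∑ t ∈ (univ.erase ⊥).powerset,
        Nat.card {g : ColoredPartition (Fin (n + 1)) μ // g.outsideBot = t}
      = ∑ t ∈ (univ.erase ⊥).powerset, Nat.card μ * Nat.card (ColoredPartition (Fin #t) μ) := by
        refine sum_congr rfl fun t ht => ?_
        have hbot : ⊥ ∉ t := fun h => (mem_erase.1 (mem_powerset.1 ht h)).1 rfl
        rw [Nat.card_congr (equivOutsideBot t hbot), Nat.card_prod, card_finset]
    _ = Nat.card μ * ∑ j ∈ range (n + 1), n.choose j * Nat.card (ColoredPartition (Fin j) μ) := by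
        rw [sum_powerset_apply_card (fun j => Nat.card μ * Nat.card (ColoredPartition (Fin j) μ)),
          hcard, mul_sum]
        refine sum_congr rfl fun j _ => ?_
        rw [smul_eq_mul]
        ring

/-- Both sides solve `F' = c · eˣ · F`, `F(0) = 1` with `c = Nat.card μ`; for the left side this
is the recurrence `card_fin_succ`. -/
theorem mk_card_div_factorial [Finite μ] :
    mk (fun n => (Nat.card (ColoredPartition (Fin n) μ) : ℚ) / n.factorial) =
      bellSeries ^ Nat.card μ := by
  refine eq_of_derivative_eq_mul ?_ (derivative_bellSeries_pow _)
    (by simp [constantCoeff_bellSeries]) ?_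
  · ext n
    rw [coeff_derivative, coeff_mk, mul_left_comm, ← map_natCast C, coeff_C_mul,
      coeff_mk_div_factorial_mul_exp, card_fin_succ, Nat.factorial_succ]
    push_cast
    field_simp
  · rw [← coeff_zero_eq_constantCoeff_apply, coeff_mk, card_fin_zero, map_pow,
      constantCoeff_bellSeries]
    simp

end ColoredPartition

namespace Finpartition

section

variable {α : Type*} [DecidableEq α]

theorem mem_parts_of_part_eq {s : Finset α} {P Q : Finpartition s}
    (h : ∀ a ∈ s, P.part a = Q.part a) {b : Finset α} (hb : b ∈ P.parts) : b ∈ Q.parts := by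
  obtain ⟨a, ha⟩ := P.nonempty_of_mem_parts hb
  have has : a ∈ s := P.le hb ha
  rw [← P.part_eq_of_mem hb ha, h a has]
  exact Q.part_mem.2 has

theorem eq_of_part_eq {s : Finset α} {P Q : Finpartition s} (h : ∀ a ∈ s, P.part a = Q.part a) :
    P = Q :=
  Finpartition.ext <| Finset.ext fun _ =>
    ⟨mem_parts_of_part_eq h, mem_parts_of_part_eq fun a ha => (h a ha).symm⟩

end

variable {α : Type*} [LinearOrder α] [Fintype α] (P : Finpartition (univ : Finset α))

def partMin (x : α) : α := (P.part x).min' (P.part_nonempty.2 (mem_univ x))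

theorem partMin_mem_part (x : α) : P.partMin x ∈ P.part x := min'_mem _ _

theorem partMin_le (x : α) : P.partMin x ≤ x := min'_le _ _ (P.mem_part_self.2 (mem_univ x))

theorem part_partMin (x : α) : P.part (P.partMin x) = P.part x :=
  P.part_eq_of_mem (P.part_mem.2 (mem_univ x)) (P.partMin_mem_part x)

theorem partMin_eq_partMin_iff {x y : α} : P.partMin x = P.partMin y ↔ P.part x = P.part y :=
  ⟨fun h => by rw [← part_partMin, h, part_partMin], fun h => by simp only [partMin, h]⟩

end Finpartition

namespace ColoredPartition

variable {α μ ν : Type*} [LinearOrder α]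

section FiberRefinement

variable [Fintype α]

abbrev FiberRefinement (α μ : Type*) [Fintype α] [DecidableEq α] : Type _ :=
  Σ f : α → μ, {P : Finpartition (univ : Finset α) // ∀ b ∈ P.parts, ∃ c, ∀ x ∈ b, f x = c}

def ofFiberRefinement (p : FiberRefinement α μ) : ColoredPartition α μ :=
  ⟨fun x => (p.2.1.partMin x, p.1 x), fun x => by
    refine ⟨p.2.1.partMin_le x, Prod.ext ?_ ?_⟩
    · rw [p.2.1.partMin_eq_partMin_iff, p.2.1.part_partMin]
    · obtain ⟨c, hc⟩ := p.2.2 _ (p.2.1.part_mem.2 (mem_univ x))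
      exact (hc _ (p.2.1.partMin_mem_part x)).trans
        (hc _ (p.2.1.mem_part_self.2 (mem_univ x))).symm⟩

theorem ofFiberRefinement_apply (p : FiberRefinement α μ) (x : α) :
    (ofFiberRefinement p).1 x = (p.2.1.partMin x, p.1 x) := rfl

noncomputable def toFinpartition (g : ColoredPartition α μ) : Finpartition (univ : Finset α) := by
  classical exact Finpartition.ofSetoid (Setoid.ker fun x => (g.1 x).1)

theorem mem_part_toFinpartition (g : ColoredPartition α μ) {x y : α} :
    y ∈ g.toFinpartition.part x ↔ (g.1 x).1 = (g.1 y).1 := by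
  classical exact Finpartition.mem_part_ofSetoid_iff_rel

theorem partMin_toFinpartition (g : ColoredPartition α μ) (x : α) :
    g.toFinpartition.partMin x = (g.1 x).1 := by
  refine le_antisymm (min'_le _ _ ?_) (le_min' _ _ _ fun y hy => ?_)
  · rw [mem_part_toFinpartition, (g.2 x).2]
  · rw [(mem_part_toFinpartition g).1 hy]
    exact (g.2 y).1

theorem toFinpartition_ofFiberRefinement (p : FiberRefinement α μ) :
    (ofFiberRefinement p).toFinpartition = p.2.1 := by
  refine Finpartition.eq_of_part_eq fun x _ => Finset.ext fun y => ?_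
  rw [mem_part_toFinpartition, ofFiberRefinement_apply, ofFiberRefinement_apply,
    p.2.1.partMin_eq_partMin_iff, p.2.1.mem_part_iff_part_eq_part (mem_univ y) (mem_univ x),
    eq_comm]

noncomputable def toFiberRefinement (g : ColoredPartition α μ) : FiberRefinement α μ :=
  ⟨g.color, g.toFinpartition, fun b hb => by
    obtain ⟨a, ha⟩ := g.toFinpartition.nonempty_of_mem_parts hb
    refine ⟨g.color a, fun x hx => ?_⟩
    rw [← g.toFinpartition.part_eq_of_mem hb ha, mem_part_toFinpartition] at hx
    rw [color, color, ← (g.2 x).2, ← hx, (g.2 a).2]⟩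

noncomputable def equivFiberRefinement : ColoredPartition α μ ≃ FiberRefinement α μ where
  toFun := toFiberRefinement
  invFun := ofFiberRefinement
  left_inv g := Subtype.ext <| funext fun x => by
    rw [ofFiberRefinement_apply]
    exact Prod.ext (partMin_toFinpartition g x) rfl
  right_inv p := Sigma.subtype_ext rfl (toFinpartition_ofFiberRefinement p)

end FiberRefinement

theorem mapColor_add_neg {G : Type*} [AddGroup G] (g : ColoredPartition α G) (c : G) :
    (g.mapColor (· + c)).mapColor (· + -c) = g :=
  mapColor_eq_self (g := g) (φ := fun x => x + c + -c) fun _ => add_neg_cancel_right _ _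

noncomputable def shiftEquiv {G : Type*} [AddGroup G] {P : (α → G) → Prop}
    (hP : ∀ f : α → G, ∃! c, P fun x => f x + c) :
    G × {g : ColoredPartition α G // P g.color} ≃ ColoredPartition α G where
  toFun p := p.2.1.mapColor (· + p.1)
  invFun g := (-(hP g.color).exists.choose,
    ⟨g.mapColor (· + (hP g.color).exists.choose), (hP g.color).exists.choose_spec⟩)
  left_inv := by
    rintro ⟨c, g, hg⟩
    dsimp only
    have hc : (hP (g.mapColor (· + c)).color).exists.choose = -c :=
      (hP _).unique (hP _).exists.choose_spec (by simpa [add_assoc] using hg)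
    simp only [hc, neg_neg, mapColor_add_neg]
  right_inv g := mapColor_add_neg g _

theorem exists_mapColor_eq {φ : μ → ν} (hφ : φ.Injective) (g : ColoredPartition α ν)
    (hg : ∀ x, g.color x ∈ Set.range φ) : ∃ g' : ColoredPartition α μ, g'.mapColor φ = g := by
  choose ψ hψ using hg
  have hψblock (x : α) : ψ (g.1 x).1 = ψ x := hφ <| by
    rw [hψ, hψ, color, color, (g.2 x).2]
  exact ⟨⟨fun x => ((g.1 x).1, ψ x), fun x => ⟨(g.2 x).1, by
    simp only [hψblock, congrArg Prod.fst (g.2 x).2]⟩⟩,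
    Subtype.ext <| funext fun x => Prod.ext rfl (hψ x)⟩

noncomputable def subtypeEquivMapColor {φ : μ → ν} (hφ : φ.Injective) {p : (α → ν) → Prop}
    (hp : ∀ f, p f → ∀ x, f x ∈ Set.range φ) :
    {g : ColoredPartition α μ // p (φ ∘ g.color)} ≃ {g : ColoredPartition α ν // p g.color} :=
  Equiv.ofBijective (fun g => ⟨g.1.mapColor φ, g.2⟩)
    ⟨fun _ _ h => Subtype.ext (mapColor_injective hφ (congrArg Subtype.val h)), fun g => by
      obtain ⟨g', hg'⟩ := exists_mapColor_eq hφ g.1 (hp _ g.2)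
      exact ⟨⟨g', by rw [← color_mapColor, hg']; exact g.2⟩, Subtype.ext hg'⟩⟩

end ColoredPartition

/-- Raney's cycle lemma. The start is the first point of a period where `R` is minimal. -/
theorem existsUnique_le_forall_le_add_of_add_eq_sub_one {n : ℕ} {R : ℕ → ℤ}
    (hR : ∀ t, R (t + (n + 1)) = R t - 1) :
    ∃! s, s ≤ n ∧ ∀ k ∈ Icc 1 n, R s ≤ R (s + k) := by
  obtain ⟨m, hm, hmin⟩ := (range (n + 1)).exists_min_image R (nonempty_range_iff.2 n.succ_ne_zero)
  have hex : ∃ s, s ≤ n ∧ R s = R m := ⟨m, Nat.lt_succ_iff.1 (mem_range.1 hm), rfl⟩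
  classical
  set s₀ := Nat.find hex
  obtain ⟨hs₀n, hs₀⟩ : s₀ ≤ n ∧ R s₀ = R m := Nat.find_spec hex
  have hle (t : ℕ) (ht : t ≤ n) : R s₀ ≤ R t := hs₀ ▸ hmin t (mem_range.2 (Nat.lt_succ_of_le ht))
  have hlt (t : ℕ) (ht : t < s₀) : R s₀ < R t :=
    lt_of_le_of_ne (hle t (by omega)) fun h => Nat.find_min hex ht ⟨by omega, hs₀ ▸ h.symm⟩
  refine ⟨s₀, ⟨hs₀n, fun k hk => ?_⟩, fun s ⟨hsn, hs⟩ => ?_⟩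
  · obtain ⟨hk1, hkn⟩ := mem_Icc.1 hk
    rcases le_or_gt (s₀ + k) n with h | h
    · exact hle _ h
    · have := hlt (s₀ + k - (n + 1)) (by omega)
      rw [show s₀ + k = s₀ + k - (n + 1) + (n + 1) by omega, hR]
      omega
  · by_contra hne
    rcases lt_or_gt_of_ne hne with h | h
    · have := hs (s₀ - s) (mem_Icc.2 ⟨by omega, by omega⟩)
      rw [show s + (s₀ - s) = s₀ by omega] at this
      linarith [hlt s h]
    · have := hs (s₀ + (n + 1) - s) (mem_Icc.2 ⟨by omega, by omega⟩)
      rw [show s + (s₀ + (n + 1) - s) = s₀ + (n + 1) by omega, hR] at this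
      linarith [hle s hsn]

/-- The condition of `IsParkingFunction` for `ℕ`-valued sequences, so that it also makes sense for
values in `ZMod (n + 1)`. -/
def IsParkingSeq (n : ℕ) (v : Fin n → ℕ) : Prop :=
  ∀ k ∈ Icc 1 n, k ≤ #{i | v i + 1 ≤ k}

theorem IsParkingSeq.lt {n : ℕ} {v : Fin n → ℕ} (hv : IsParkingSeq n v) (i : Fin n) : v i < n := by
  by_contra! h
  have hsub : ({j | v j + 1 ≤ n} : Finset (Fin n)) ⊆ univ.erase i := fun j hj =>
    mem_erase.2 ⟨by rintro rfl; simp at hj; omega, mem_univ j⟩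
  have := (hv n (mem_Icc.2 ⟨Fin.pos i, le_rfl⟩)).trans (card_le_card hsub)
  simp only [mem_univ, card_erase_of_mem, card_univ, Fintype.card_fin] at this
  have := Fin.pos i
  omega

namespace CycleLemma

variable {n : ℕ} (v : Fin n → ZMod (n + 1))

def mult (z : ZMod (n + 1)) : ℕ := #{i | v i = z}

def excess (t : ℕ) : ℤ := (∑ u ∈ range t, mult v u : ℕ) - t

theorem card_val_sub_lt (c : ZMod (n + 1)) {k : ℕ} (hk : k ≤ n + 1) :
    #{i | (v i - c).val < k} = ∑ u ∈ range k, mult v (u + c) := by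
  rw [card_eq_sum_card_fiberwise (f := fun i => (v i - c).val) (t := range k)
    fun i hi => mem_range.2 (mem_filter.1 hi).2]
  refine sum_congr rfl fun u hu => congrArg card (Finset.ext fun i => ?_)
  have huk := mem_range.1 hu
  have hu : u < n + 1 := huk.trans_le hk
  simp only [mem_filter, mem_univ, true_and]
  constructor
  · rintro ⟨-, h⟩
    rw [← h, ZMod.natCast_zmod_val, sub_add_cancel]
  · intro h
    rw [h, add_sub_cancel_right, ZMod.val_cast_of_lt hu]
    exact ⟨huk, rfl⟩

theorem excess_add (t : ℕ) {k : ℕ} (hk : k ≤ n + 1) :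
    excess v (t + k) = excess v t + #{i | (v i - t).val < k} - k := by
  have hwindow : ∑ u ∈ range (t + k), mult v u =
      ∑ u ∈ range t, mult v u + #{i | (v i - t).val < k} := by
    rw [sum_range_add, card_val_sub_lt v _ hk]
    congr 1
    refine sum_congr rfl fun u _ => ?_
    rw [Nat.cast_add, add_comm]
  simp only [excess, hwindow]
  push_cast
  ring

theorem excess_add_period (t : ℕ) : excess v (t + (n + 1)) = excess v t - 1 := by
  rw [excess_add v t le_rfl, filter_true_of_mem fun i _ => ZMod.val_lt _, card_univ,
    Fintype.card_fin]
  push_cast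
  ring

theorem isParkingSeq_add_iff (c : ZMod (n + 1)) :
    IsParkingSeq n (fun i => (v i + c).val) ↔
      ∀ k ∈ Icc 1 n, excess v (-c).val ≤ excess v ((-c).val + k) := by
  refine forall₂_congr fun k hk => ?_
  rw [excess_add v _ (by linarith [(mem_Icc.1 hk).2])]
  simp only [ZMod.natCast_zmod_val, sub_neg_eq_add, Nat.lt_iff_add_one_le]
  omega

theorem existsUnique_isParkingSeq_add :
    ∃! c : ZMod (n + 1), IsParkingSeq n (fun i => (v i + c).val) := by
  obtain ⟨s, ⟨hsn, hs⟩, huniq⟩ :=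
    existsUnique_le_forall_le_add_of_add_eq_sub_one (excess_add_period v)
  have hval : (-(-(s : ZMod (n + 1)))).val = s := by
    rw [neg_neg, ZMod.val_cast_of_lt (Nat.lt_succ_of_le hsn)]
  refine ⟨-(s : ZMod (n + 1)), ?_, fun c hc => ?_⟩
  · show IsParkingSeq n _
    rw [isParkingSeq_add_iff, hval]
    exact hs
  rw [← huniq _ ⟨Nat.lt_succ_iff.1 (ZMod.val_lt _), (isParkingSeq_add_iff v c).1 hc⟩,
    ZMod.natCast_zmod_val, neg_neg]

end CycleLemma

theorem aCount_eq_card_isParkingFunction (n : ℕ) :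
    aCount n = Nat.card {g : ColoredPartition (Fin n) (Fin n) // IsParkingFunction n g.color} :=
  Nat.card_congr <| (Equiv.subtypeSigmaEquiv _ _).symm.trans
    (ColoredPartition.equivFiberRefinement.subtypeEquiv fun _ => Iff.rfl).symm

theorem card_isParkingFunction_eq_card_isParkingSeq (n : ℕ) :
    Nat.card {g : ColoredPartition (Fin n) (Fin n) // IsParkingFunction n g.color} =
      Nat.card {g : ColoredPartition (Fin n) (ZMod (n + 1)) //
        IsParkingSeq n fun i => (g.color i).val} := by
  have hval (i : Fin n) : ((i : ℕ) : ZMod (n + 1)).val = i := ZMod.val_cast_of_lt (by omega)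
  have hφ : (fun i : Fin n => ((i : ℕ) : ZMod (n + 1))).Injective := fun i j h =>
    Fin.ext <| by simpa only [hval] using congrArg ZMod.val h
  refine Nat.card_congr ((Equiv.subtypeEquivRight fun g => ?_).trans
    (ColoredPartition.subtypeEquivMapColor hφ
      (p := fun f => IsParkingSeq n fun i => (f i).val) fun f hf x => ?_))
  · simp only [Function.comp_apply, hval]
    rfl
  · exact ⟨⟨(f x).val, hf.lt x⟩, ZMod.natCast_zmod_val (f x)⟩

theorem succ_mul_aCount (n : ℕ) :
    (n + 1) * aCount n = Nat.card (ColoredPartition (Fin n) (ZMod (n + 1))) := by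
  rw [← Nat.card_congr (ColoredPartition.shiftEquiv
      (P := fun f => IsParkingSeq n fun i => (f i).val) CycleLemma.existsUnique_isParkingSeq_add),
    Nat.card_prod, Nat.card_zmod, aCount_eq_card_isParkingFunction,
    card_isParkingFunction_eq_card_isParkingSeq]

/-- `A(t) = exp (exp (t·A(t)) − 1)` in `ℚ⟦t⟧`, and
`a(0), …, a(5) = 1, 1, 4, 29, 311, 4447`. -/
theorem aEGF_functional_equation :
    A = seriesComp (PowerSeries.exp ℚ)
          (seriesComp (PowerSeries.exp ℚ) (PowerSeries.X * A) - 1) ∧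
    aCount 0 = 1 ∧ aCount 1 = 1 ∧ aCount 2 = 4 ∧ aCount 3 = 29 ∧
    aCount 4 = 311 ∧ aCount 5 = 4447 := by
  refine ⟨?_, ?_, ?_, ?_, ?_, ?_, ?_⟩
  · rw [seriesComp_exp_seriesComp_exp_sub_one (by simp)]
    refine eq_subst_X_mul_of_coeff_pow (by simp [constantCoeff_bellSeries]) fun n => ?_
    have hcount : ((n + 1 : ℕ) : ℚ) * aCount n =
        Nat.card (ColoredPartition (Fin n) (ZMod (n + 1))) := by
      exact_mod_cast succ_mul_aCount n
    rw [← Nat.card_zmod (n + 1), ← ColoredPartition.mk_card_div_factorial, coeff_mk, A, coeff_mk,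
      ← hcount]
    push_cast
    ring
  all_goals
    refine Nat.eq_of_mul_eq_mul_left (Nat.succ_pos _) ((succ_mul_aCount _).trans ?_)
    simp only [ColoredPartition.card_fin_succ, ColoredPartition.card_fin_zero, sum_range_succ,
      sum_range_zero, Nat.card_zmod] <;>
    norm_num [Nat.choose]
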